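/- The arboricity polynomial is multiplicative over direct sums: if M = M_1 ⊕ M_2 is the direct sum of matroids M_1 and M_2 on disjoint ground sets, then A_M(k) = A_{M_1}(k) · A_{M_2}(k) for all k. -/
import Mathlib


/-- The arboricity polynomial is multiplicative over direct sums: if `M` on the
disjoint union of the ground sets of `M₁` and `M₂` has a subset independent iff
its intersection with each part is independent in the corresponding matroid,
then `A_M(k) = A_{M₁}(k) · A_{M₂}(k)` for all `k`. -/
theorem arboricity_direct_sum {α β : Type*} [Fintype α] [Fintype β]
    (M₁ : Matroid α) (M₂ : Matroid β) (M : Matroid (α ⊕ β))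
    (hE₁ : M₁.E = Set.univ) (hE₂ : M₂.E = Set.univ) (hE : M.E = Set.univ)
    (hInd : ∀ s : Set (α ⊕ β),
      M.Indep s ↔ M₁.Indep (Sum.inl ⁻¹' s) ∧ M₂.Indep (Sum.inr ⁻¹' s))
    (k : ℕ) :
    Nat.card {g : α ⊕ β → Fin k // ∀ t, M.Indep (g ⁻¹' {t})} =
      Nat.card {g : α → Fin k // ∀ t, M₁.Indep (g ⁻¹' {t})} *
        Nat.card {g : β → Fin k // ∀ t, M₂.Indep (g ⁻¹' {t})} := by
  rw [← Nat.card_prod]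
  apply Nat.card_congr
  exact
    { toFun := fun g =>
        (⟨fun a => g.1 (.inl a), fun t => ((hInd _).1 (g.2 t)).1⟩,
         ⟨fun b => g.1 (.inr b), fun t => ((hInd _).1 (g.2 t)).2⟩)
      invFun := fun p =>
        ⟨Sum.elim p.1.1 p.2.1, fun t => (hInd _).2 ⟨p.1.2 t, p.2.2 t⟩⟩
      left_inv := fun g => by
        ext x; cases x <;> rfl
      right_inv := fun p => by
        refine Prod.ext ?_ ?_ <;> ext x <;> rfl }
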